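/- Fix k ∈ ℤ and a measurable set A ⊆ ℝⁿ. Then ∫_{[0,1]ⁿ} |{v ∈ ℤⁿ : 2^{-(k-1)}([0,1]ⁿ + (v-w)/2) ⊆ A}| dw = 2^{nk} · Vₙ(A ⊖ [0, 2^{-(k-1)}]ⁿ). -/

import Mathlib

open MeasureTheory

/-- The (real-offset) dyadic hypercube `2^{-k}([0,1]ⁿ + u)` for `u ∈ ℝⁿ`. -/
def dyadicCubeR (n : ℕ) (k : ℤ) (u : Fin n → ℝ) : Set (Fin n → ℝ) :=
  {x | ∀ i, (2 : ℝ) ^ (-k) * u i ≤ x i ∧ x i ≤ (2 : ℝ) ^ (-k) * (u i + 1)}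

/-- The Minkowski erosion `A ⊖ B = {x : B + x ⊆ A}`. -/
def erosion {n : ℕ} (A B : Set (Fin n → ℝ)) : Set (Fin n → ℝ) :=
  {x | ∀ b ∈ B, b + x ∈ A}

/-!
Write `E` for the erosion `A ⊖ [0, 2^{-(k-1)}]ⁿ`. The cube `2^{-(k-1)}([0,1]ⁿ + (v - w)/2)` lies in
`A` iff `2^{-k}(v - w) ∈ E`. Exchanging sum and integral and substituting `x = v - w`, the
translates `v - [0,1]ⁿ` tile `ℝⁿ` up to null sets, so the left side is `Vₙ(2^k E) = 2^{nk} Vₙ(E)`.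

The delicate point is measurability, since `A` is arbitrary. Eroding by the open cube instead gives
a closed set `E' ⊇ E`, and every point of `E' \ E` sees, at all small scales, a box of proportion
`2^{-n}` of the surrounding ball outside `E'`; so `E' \ E` has no Lebesgue density points and is null.
-/

open Set Metric Filter
open scoped ENNReal Topology

section Tiling

variable {ι : Type*} [Fintype ι]

theorem lintegral_eq_tsum_setLIntegral_pi_Ioc_int (f : (ι → ℝ) → ℝ≥0∞) :
    ∫⁻ x, f x = ∑' v : ι → ℤ, ∫⁻ x in univ.pi fun i => Ioc (v i - 1 : ℝ) (v i), f x := by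
  have hfiber : ∀ v : ι → ℤ,
      (univ.pi fun i => Ioc (v i - 1 : ℝ) (v i)) = (fun x i => ⌈x i⌉) ⁻¹' {v} := by
    intro v
    ext x
    simp [funext_iff, Int.ceil_eq_iff]
  have hceil : Measurable fun (x : ι → ℝ) i => ⌈x i⌉ :=
    measurable_pi_lambda _ fun i => Int.measurable_ceil.comp (measurable_pi_apply i)
  simp_rw [hfiber]
  rw [← lintegral_iUnion (fun v => hceil (measurableSet_singleton v)) (pairwise_disjoint_fiber _),
    ← preimage_iUnion, iUnion_of_singleton, preimage_univ, Measure.restrict_univ]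

theorem lintegral_unitCube_tsum_comp_intCast_sub {f : (ι → ℝ) → ℝ≥0∞} (hf : AEMeasurable f) :
    ∫⁻ w in {w : ι → ℝ | ∀ i, w i ∈ Icc 0 1}, ∑' v : ι → ℤ, f (fun i => v i - w i) = ∫⁻ x, f x := by
  have hsub : ∀ v : ι → ℝ, MeasurePreserving (v - ·) (volume : Measure (ι → ℝ)) volume :=
    fun v => Measure.measurePreserving_sub_left volume v
  have hcube : ∀ v : ι → ℤ, {w : ι → ℝ | ∀ i, w i ∈ Icc 0 1} =
      ((fun i => (v i : ℝ)) - ·) ⁻¹' univ.pi fun i => Icc (v i - 1 : ℝ) (v i) := by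
    intro v
    ext w
    simp only [mem_ofPred_eq, mem_preimage, mem_univ_pi, mem_Icc, Pi.sub_apply]
    exact forall_congr' fun i => by constructor <;> intro h <;> constructor <;> linarith [h.1, h.2]
  rw [lintegral_tsum (f := fun (v : ι → ℤ) (w : ι → ℝ) => f fun i => v i - w i) fun v =>
      (hf.comp_quasiMeasurePreserving (hsub _).quasiMeasurePreserving).restrict,
    lintegral_eq_tsum_setLIntegral_pi_Ioc_int]
  refine tsum_congr fun v => ?_
  rw [hcube v]
  refine ((hsub _).setLIntegral_comp_preimage_emb
    (MeasurableEquiv.subLeft _).measurableEmbedding f _).trans ?_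
  rw [volume_pi]
  exact setLIntegral_congr Measure.pi_Ioc_ae_eq_pi_Icc.symm

end Tiling

section Density

theorem measure_eq_zero_of_frequently_measure_inter_closedBall_le {β : Type*} [MetricSpace β]
    [MeasurableSpace β] [BorelSpace β] [SecondCountableTopology β] [HasBesicovitchCovering β]
    (μ : Measure β) [IsLocallyFiniteMeasure μ] {s : Set β} {q : ℝ≥0∞} (hq : q < 1)
    (h : ∀ x ∈ s, ∃ᶠ r in 𝓝[>] 0, μ (s ∩ closedBall x r) ≤ q * μ (closedBall x r)) :
    μ s = 0 := by
  rw [← Measure.restrict_apply_self, measure_eq_zero_iff_ae_notMem]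
  filter_upwards [Besicovitch.ae_tendsto_measure_inter_div μ s] with x hx hxs
  obtain ⟨r, hle, hlt⟩ := ((h x hxs).and_eventually (hx (Ioi_mem_nhds hq))).exists
  exact (ENNReal.div_le_of_le_mul hle).not_gt hlt

theorem volume_inter_closedBall_le_of_disjoint_pi_Ioo {ι : Type*} [Fintype ι] {s : Set (ι → ℝ)}
    {y m : ι → ℝ} {r : ℝ} (hr : 0 ≤ r)
    (hsub : (univ.pi fun i => Ioo (m i) (m i + r)) ⊆ closedBall y r)
    (hdisj : Disjoint (univ.pi fun i => Ioo (m i) (m i + r)) s) :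
    volume (s ∩ closedBall y r) ≤ (1 - (2 ^ Fintype.card ι)⁻¹) * volume (closedBall y r) := by
  set J := univ.pi fun i => Ioo (m i) (m i + r)
  have hJ : volume J = ENNReal.ofReal r ^ Fintype.card ι := by
    simp [J, Real.volume_pi_Ioo]
  have hB : volume (closedBall y r) = 2 ^ Fintype.card ι * ENNReal.ofReal r ^ Fintype.card ι := by
    rw [Real.volume_pi_closedBall _ hr, ENNReal.ofReal_pow (by positivity),
      ENNReal.ofReal_mul zero_le_two, ENNReal.ofReal_ofNat, mul_pow]
  calc volume (s ∩ closedBall y r) ≤ volume (closedBall y r \ J) :=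
        measure_mono fun x hx => ⟨hx.2, fun hxJ => hdisj.notMem_of_mem_left hxJ hx.1⟩
    _ = volume (closedBall y r) - volume J :=
        measure_sdiff hsub (MeasurableSet.univ_pi fun _ => measurableSet_Ioo).nullMeasurableSet
          (by rw [hJ]; finiteness)
    _ = (1 - (2 ^ Fintype.card ι)⁻¹) * volume (closedBall y r) := by
        rw [hB, hJ, ENNReal.sub_mul fun _ _ => by finiteness, one_mul, ← mul_assoc,
          ENNReal.inv_mul_cancel (by positivity) (by finiteness), one_mul]

end Density

section Erosion

variable {n : ℕ}

theorem isClosed_erosion (A : Set (Fin n → ℝ)) {B : Set (Fin n → ℝ)} (hB : IsOpen B) :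
    IsClosed (erosion A B) := by
  have hcompl : (erosion A B)ᶜ = ⋃ c ∈ Aᶜ, (c - ·) ⁻¹' B := by
    ext x
    simp only [erosion, mem_compl_iff, mem_ofPred_eq, not_forall, mem_iUnion, mem_preimage,
      exists_prop]
    exact ⟨fun ⟨b, hb, hbx⟩ => ⟨b + x, hbx, by simpa using hb⟩,
      fun ⟨c, hc, hcx⟩ => ⟨c - x, hcx, by simpa using hc⟩⟩
  rw [← isOpen_compl_iff, hcompl]
  exact isOpen_biUnion fun c _ => hB.preimage (continuous_const.sub continuous_id)

theorem exists_Ioo_subset_Ioo_inter_Icc {a y r L : ℝ} (hay : a ≤ y) (hya : y ≤ a + L)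
    (hrL : r ≤ L) : ∃ m, Ioo m (m + r) ⊆ Ioo a (a + L) ∩ Icc (y - r) (y + r) := by
  refine ⟨max a (y - r), fun x hx => ?_⟩
  obtain ⟨hx₁, hx₂⟩ := hx
  have hr : 0 < r := by linarith
  have h₁ : max a (y - r) ≤ a + L - r := max_le (by linarith) (by linarith)
  have h₂ : max a (y - r) ≤ y := max_le hay (by linarith)
  have h₃ := le_max_left a (y - r)
  have h₄ := le_max_right a (y - r)
  exact ⟨⟨by linarith, by linarith⟩, by linarith, by linarith⟩

/-- A witness `b ∈ [0, L]ⁿ` with `y + b ∉ A` keeps the whole open box `y + b - (0, L)ⁿ` out of the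
erosion by the open cube, and `y` lies in the closure of that box. -/
theorem exists_pi_Ioo_subset_closedBall_disjoint_erosion {A : Set (Fin n → ℝ)} {L r : ℝ}
    {y : Fin n → ℝ} (hy : y ∉ erosion A {x | ∀ i, x i ∈ Icc 0 L}) (hr : 0 ≤ r) (hrL : r ≤ L) :
    ∃ m : Fin n → ℝ, (univ.pi fun i => Ioo (m i) (m i + r)) ⊆ closedBall y r ∧
      Disjoint (univ.pi fun i => Ioo (m i) (m i + r)) (erosion A {x | ∀ i, x i ∈ Ioo 0 L}) := by
  obtain ⟨b, hb, hbA⟩ : ∃ b : Fin n → ℝ, (∀ i, b i ∈ Icc 0 L) ∧ b + y ∉ A := by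
    simpa [erosion] using hy
  choose m hm using fun i => exists_Ioo_subset_Ioo_inter_Icc (a := y i + b i - L) (y := y i)
    (by linarith [(hb i).2]) (by linarith [(hb i).1]) hrL
  refine ⟨m, fun x hx => ?_, disjoint_left.2 fun x hx hxE => hbA ?_⟩
  · rw [closedBall_pi _ hr]
    intro i _
    simp only [Real.closedBall_eq_Icc]
    exact (hm i (hx i trivial)).2
  · have hmem : ∀ i, (b + y - x) i ∈ Ioo 0 L := fun i => by
      have := (hm i (hx i trivial)).1
      simp only [Pi.sub_apply, Pi.add_apply, mem_Ioo] at this ⊢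
      constructor <;> linarith [this.1, this.2]
    simpa using hxE _ hmem

theorem volume_erosion_Ioo_diff_erosion_Icc (A : Set (Fin n → ℝ)) {L : ℝ} (hL : 0 < L) :
    volume (erosion A {x | ∀ i, x i ∈ Ioo 0 L} \ erosion A {x | ∀ i, x i ∈ Icc 0 L}) = 0 := by
  refine measure_eq_zero_of_frequently_measure_inter_closedBall_le volume (q := 1 - (2 ^ n)⁻¹)
    (ENNReal.sub_lt_self ENNReal.one_ne_top one_ne_zero (by simp)) fun y hy => ?_
  refine (eventually_of_mem (Ioo_mem_nhdsGT hL) fun r hr => ?_).frequently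
  obtain ⟨m, hsub, hdisj⟩ :=
    exists_pi_Ioo_subset_closedBall_disjoint_erosion hy.2 hr.1.le hr.2.le
  calc volume ((erosion A {x | ∀ i, x i ∈ Ioo 0 L} \ erosion A {x | ∀ i, x i ∈ Icc 0 L}) ∩
        closedBall y r)
      ≤ volume (erosion A {x | ∀ i, x i ∈ Ioo 0 L} ∩ closedBall y r) :=
        measure_mono (inter_subset_inter_left _ sdiff_subset)
    _ ≤ (1 - (2 ^ n)⁻¹) * volume (closedBall y r) := by
        simpa using volume_inter_closedBall_le_of_disjoint_pi_Ioo hr.1.le hsub hdisj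

theorem nullMeasurableSet_erosion_Icc (A : Set (Fin n → ℝ)) {L : ℝ} (hL : 0 < L) :
    NullMeasurableSet (erosion A {x | ∀ i, x i ∈ Icc 0 L}) volume := by
  have hsub : erosion A {x | ∀ i, x i ∈ Icc 0 L} ⊆ erosion A {x | ∀ i, x i ∈ Ioo 0 L} :=
    fun x hx b hb => hx b fun i => Ioo_subset_Icc_self (hb i)
  have hopen : IsOpen {x : Fin n → ℝ | ∀ i, x i ∈ Ioo 0 L} := by
    simpa [Set.pi] using isOpen_set_pi finite_univ fun (_ : Fin n) _ => isOpen_Ioo (a := 0) (b := L)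
  rw [← sdiff_sdiff_cancel_left hsub]
  exact (isClosed_erosion A hopen).measurableSet.nullMeasurableSet.diff
    (.of_null (volume_erosion_Ioo_diff_erosion_Icc A hL))

theorem dyadicCubeR_subset_iff (k : ℤ) (u : Fin n → ℝ) (A : Set (Fin n → ℝ)) :
    dyadicCubeR n k u ⊆ A ↔
      (2 : ℝ) ^ (-k) • u ∈ erosion A {x | ∀ i, x i ∈ Icc 0 ((2 : ℝ) ^ (-k))} := by
  constructor
  · intro h b hb
    apply h
    intro i
    simp only [Pi.add_apply, Pi.smul_apply, smul_eq_mul]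
    constructor <;> linarith [(hb i).1, (hb i).2]
  · intro h x hx
    have hmem : ∀ i, (x - (2 : ℝ) ^ (-k) • u) i ∈ Icc 0 ((2 : ℝ) ^ (-k)) := fun i => by
      simp only [Pi.sub_apply, Pi.smul_apply, smul_eq_mul, mem_Icc]
      constructor <;> linarith [(hx i).1, (hx i).2]
    simpa using h _ hmem

end Erosion

theorem ENNReal.ofReal_two_zpow (z : ℤ) : ENNReal.ofReal ((2 : ℝ) ^ z) = 2 ^ z := by
  rw [← NNReal.coe_ofNat, ← NNReal.coe_zpow, ENNReal.ofReal_coe_nnreal,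
    ENNReal.coe_zpow two_ne_zero]
  rfl

theorem stmt_5_general (n : ℕ) (k : ℤ) (A : Set (Fin n → ℝ)) :
    ∫⁻ w in {w : Fin n → ℝ | ∀ i, w i ∈ Set.Icc (0 : ℝ) 1},
        ∑' v : Fin n → ℤ,
          Set.indicator {w' : Fin n → ℝ |
              dyadicCubeR n (k - 1) (fun i => ((v i : ℝ) - w' i) / 2) ⊆ A}
            (fun _ => (1 : ENNReal)) w ∂volume
      = (2 : ENNReal) ^ ((n : ℤ) * k) *
          volume (erosion A {x : Fin n → ℝ | ∀ i, x i ∈ Set.Icc (0 : ℝ) ((2 : ℝ) ^ (-(k - 1)))}) := by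
  set E := erosion A {x : Fin n → ℝ | ∀ i, x i ∈ Set.Icc (0 : ℝ) ((2 : ℝ) ^ (-(k - 1)))}
  have hc : (2 : ℝ) ^ (-k) ≠ 0 := by positivity
  have hS : NullMeasurableSet (((2 : ℝ) ^ (-k) • ·) ⁻¹' E) volume :=
    (nullMeasurableSet_erosion_Icc A (by positivity)).preimage
      (Measure.quasiMeasurePreserving_smul volume hc)
  have hind : ∀ (v : Fin n → ℤ) (w : Fin n → ℝ),
      {w' : Fin n → ℝ | dyadicCubeR n (k - 1) (fun i => ((v i : ℝ) - w' i) / 2) ⊆ A}.indicator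
        (fun _ => (1 : ℝ≥0∞)) w = (((2 : ℝ) ^ (-k) • ·) ⁻¹' E).indicator 1 fun i => v i - w i := by
    intro v w
    have hscale : (2 : ℝ) ^ (-(k - 1)) • (fun i => ((v i : ℝ) - w i) / 2) =
        (2 : ℝ) ^ (-k) • fun i => (v i : ℝ) - w i := by
      rw [show -(k - 1) = -k + 1 by ring, zpow_add_one₀ two_ne_zero]
      ext i
      simp only [Pi.smul_apply, smul_eq_mul]
      ring
    classical
    simp only [indicator_apply, mem_ofPred_eq, mem_preimage, dyadicCubeR_subset_iff, hscale]
    rfl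
  simp_rw [hind]
  rw [lintegral_unitCube_tsum_comp_intCast_sub (measurable_one.aemeasurable.indicator₀ hS),
    lintegral_indicator_one₀ hS, Measure.addHaar_preimage_smul volume hc, Module.finrank_fin_fun,
    ← zpow_natCast, ← zpow_mul, ← zpow_neg, abs_of_pos (by positivity), neg_mul, neg_neg,
    mul_comm k, ENNReal.ofReal_two_zpow]

/-- `∫_{[0,1]ⁿ} |{v ∈ ℤⁿ : 2^{-(k-1)}([0,1]ⁿ + (v-w)/2) ⊆ A}| dw
      = 2^{nk} Vₙ(A ⊖ [0, 2^{-(k-1)}]ⁿ)`,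
the cardinality being written as a `tsum` of indicators. -/
theorem stmt_5 (n : ℕ) (k : ℤ) (A : Set (Fin n → ℝ)) (hA : MeasurableSet A) :
    ∫⁻ w in {w : Fin n → ℝ | ∀ i, w i ∈ Set.Icc (0 : ℝ) 1},
        ∑' v : Fin n → ℤ,
          Set.indicator {w' : Fin n → ℝ |
              dyadicCubeR n (k - 1) (fun i => ((v i : ℝ) - w' i) / 2) ⊆ A}
            (fun _ => (1 : ENNReal)) w ∂volume
      = (2 : ENNReal) ^ ((n : ℤ) * k) *
          volume (erosion A {x : Fin n → ℝ | ∀ i, x i ∈ Set.Icc (0 : ℝ) ((2 : ℝ) ^ (-(k - 1)))}) :=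
  stmt_5_general n k A
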